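/- arXiv:2509.17111 — 3 statements merged into one kernel-verified Lean document; each statement's English description precedes it below -/
import Mathlib

section
/- Let A be Hurwitz, X the solution of AᵀX + XA = -I, and R(A) = 1/λ_max(X). Then for any perturbation term g(t,x) with ‖g(t,x)‖ ≤ γ‖x‖ where 2γλ_max(X) < 1, the origin of the perturbed system ẋ = Ax + g(t,x) is exponentially stable. -/
open Matrix

/-- Euclidean norm of a finite real vector. -/
noncomputable def euclNorm {n : ℕ} (v : Fin n → ℝ) : ℝ := Real.sqrt (∑ i, v i ^ 2)

lemma euclNorm_nonneg {n : ℕ} (v : Fin n → ℝ) : 0 ≤ euclNorm v := Real.sqrt_nonneg _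

lemma dot_self_nonneg {n : ℕ} (v : Fin n → ℝ) : 0 ≤ v ⬝ᵥ v :=
  Finset.sum_nonneg fun i _ => mul_self_nonneg _

lemma euclNorm_sq {n : ℕ} (v : Fin n → ℝ) : euclNorm v ^ 2 = v ⬝ᵥ v := by
  rw [euclNorm, Real.sq_sqrt (Finset.sum_nonneg fun i _ => sq_nonneg _)]
  simp [dotProduct, sq]

lemma euclNorm_eq_sqrt_dot {n : ℕ} (v : Fin n → ℝ) : euclNorm v = Real.sqrt (v ⬝ᵥ v) := by
  rw [← euclNorm_sq, Real.sqrt_sq (euclNorm_nonneg v)]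

lemma my_mulVec_dot {n : ℕ} (M : Matrix (Fin n) (Fin n) ℝ) (v w : Fin n → ℝ) :
    (M *ᵥ v) ⬝ᵥ w = v ⬝ᵥ (Mᵀ *ᵥ w) := by
  rw [dotProduct_comm, dotProduct_mulVec, ← mulVec_transpose, dotProduct_comm]

lemma my_spec {n : ℕ} {X : Matrix (Fin n) (Fin n) ℝ} (hX : X.IsHermitian) (v w : Fin n → ℝ) :
    v ⬝ᵥ (X *ᵥ w) = ∑ i, hX.eigenvalues i *
      (((hX.eigenvectorUnitary : Matrix (Fin n) (Fin n) ℝ)ᵀ *ᵥ v) i *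
       ((hX.eigenvectorUnitary : Matrix (Fin n) (Fin n) ℝ)ᵀ *ᵥ w) i) := by
  set U : Matrix (Fin n) (Fin n) ℝ := (hX.eigenvectorUnitary : Matrix (Fin n) (Fin n) ℝ)
  have hst : star U = Uᵀ := by
    rw [star_eq_conjTranspose, conjTranspose_eq_transpose_of_trivial]
  conv_lhs => rw [hX.spectral_theorem, Unitary.conjStarAlgAut_apply]
  rw [hst, mul_assoc, ← mulVec_mulVec, dotProduct_mulVec, ← mulVec_transpose, ← mulVec_mulVec]
  simp only [dotProduct, mulVec_diagonal, Function.comp_apply, RCLike.ofReal_real_eq_id, id]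
  exact Finset.sum_congr rfl fun i _ => by show (Uᵀ *ᵥ v) i * _ = _; ring

lemma my_norm {n : ℕ} {X : Matrix (Fin n) (Fin n) ℝ} (hX : X.IsHermitian) (v : Fin n → ℝ) :
    ((hX.eigenvectorUnitary : Matrix (Fin n) (Fin n) ℝ)ᵀ *ᵥ v) ⬝ᵥ
    ((hX.eigenvectorUnitary : Matrix (Fin n) (Fin n) ℝ)ᵀ *ᵥ v) = v ⬝ᵥ v := by
  set U : Matrix (Fin n) (Fin n) ℝ := (hX.eigenvectorUnitary : Matrix (Fin n) (Fin n) ℝ)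
  have hst : star U = Uᵀ := by
    rw [star_eq_conjTranspose, conjTranspose_eq_transpose_of_trivial]
  rw [my_mulVec_dot, mulVec_mulVec, transpose_transpose, ← hst,
    (Matrix.mem_unitaryGroup_iff).mp hX.eigenvectorUnitary.2, one_mulVec]

/-- Upper bound on bilinear form by the largest eigenvalue. -/
lemma my_upper {n : ℕ} {X : Matrix (Fin n) (Fin n) ℝ} (hX : X.IsHermitian) {L : ℝ}
    (hL : 0 ≤ L) (hpos : ∀ i, 0 ≤ hX.eigenvalues i) (hle : ∀ i, hX.eigenvalues i ≤ L)
    (v w : Fin n → ℝ) : v ⬝ᵥ (X *ᵥ w) ≤ L * (euclNorm v * euclNorm w) := by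
  set U : Matrix (Fin n) (Fin n) ℝ := (hX.eigenvectorUnitary : Matrix (Fin n) (Fin n) ℝ)
  set a := Uᵀ *ᵥ v with ha
  set b := Uᵀ *ᵥ w with hb
  rw [my_spec hX]
  have step1 : ∑ i, hX.eigenvalues i * (a i * b i) ≤ L * ∑ i, |a i| * |b i| := by
    rw [Finset.mul_sum]
    refine Finset.sum_le_sum fun i _ => ?_
    calc hX.eigenvalues i * (a i * b i) ≤ hX.eigenvalues i * (|a i| * |b i|) := by
          refine mul_le_mul_of_nonneg_left ?_ (hpos i)
          calc a i * b i ≤ |a i * b i| := le_abs_self _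
            _ = |a i| * |b i| := abs_mul _ _
      _ ≤ L * (|a i| * |b i|) :=
          mul_le_mul_of_nonneg_right (hle i) (by positivity)
  refine step1.trans ?_
  have step2 : ∑ i, |a i| * |b i| ≤ euclNorm v * euclNorm w := by
    have := Real.sum_mul_le_sqrt_mul_sqrt Finset.univ (fun i => |a i|) (fun i => |b i|)
    simp only [sq_abs] at this
    refine this.trans (le_of_eq ?_)
    rw [euclNorm_eq_sqrt_dot v, euclNorm_eq_sqrt_dot w, ← my_norm hX v, ← my_norm hX w]
    simp [dotProduct, sq, ha, hb]
    rfl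
  exact mul_le_mul_of_nonneg_left step2 hL

/-- Lower bound on quadratic form by the smallest eigenvalue. -/
lemma my_lower {n : ℕ} {X : Matrix (Fin n) (Fin n) ℝ} (hX : X.IsHermitian) {m : ℝ}
    (hge : ∀ i, m ≤ hX.eigenvalues i) (v : Fin n → ℝ) :
    m * (v ⬝ᵥ v) ≤ v ⬝ᵥ (X *ᵥ v) := by
  rw [my_spec hX, ← my_norm hX v]
  set a := (hX.eigenvectorUnitary : Matrix (Fin n) (Fin n) ℝ)ᵀ *ᵥ v
  calc m * (a ⬝ᵥ a) = ∑ i, m * (a i * a i) := by rw [dotProduct, Finset.mul_sum]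
    _ ≤ ∑ i, hX.eigenvalues i * (a i * a i) :=
        Finset.sum_le_sum fun i _ => mul_le_mul_of_nonneg_right (hge i) (mul_self_nonneg _)

/-- If `A` is Hurwitz with Lyapunov solution `X` of `AᵀX + XA = -I`, and the perturbation
`g` satisfies `‖g(t,x)‖ ≤ γ‖x‖` with `γ · 2λ_max(X) < 1`, then the origin of the perturbed
system `ẋ = Ax + g(t,x)` is exponentially stable. -/
theorem stmt1 {n : ℕ} (A X : Matrix (Fin n) (Fin n) ℝ)
    (g : ℝ → (Fin n → ℝ) → (Fin n → ℝ)) (γ : ℝ) (hγ : 0 ≤ γ)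
    (hHurwitz : ∀ μ ∈ spectrum ℂ (A.map Complex.ofReal), μ.re < 0)
    (hX : X.IsHermitian) (hXpd : X.PosDef)
    (hLyap : Aᵀ * X + X * A = -1)
    (hg : ∀ t x, euclNorm (g t x) ≤ γ * euclNorm x)
    (hsmall : γ * (2 * ⨆ i, hX.eigenvalues i) < 1) :
    ∃ C lam : ℝ, 0 < C ∧ 0 < lam ∧
      ∀ x : ℝ → Fin n → ℝ,
        (∀ t i, HasDerivAt (fun s => x s i) ((A.mulVec (x t) + g t (x t)) i) t) →
        ∀ t, 0 ≤ t → euclNorm (x t) ≤ C * euclNorm (x 0) * Real.exp (-lam * t) := by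
  classical
  by_cases hn : n = 0
  · subst hn
    refine ⟨1, 1, one_pos, one_pos, fun x _ t _ => ?_⟩
    have h0 : ∀ s, euclNorm (x s) = 0 := fun s => by simp [euclNorm]
    rw [h0 t, h0 0]
    simp
  have : Nonempty (Fin n) := ⟨⟨0, Nat.pos_of_ne_zero hn⟩⟩
  set ev := hX.eigenvalues with hev
  set L := ⨆ i, ev i with hLdef
  set m := ⨅ i, ev i with hmdef
  have hbdd : BddAbove (Set.range ev) := (Set.finite_range ev).bddAbove
  have hbddb : BddBelow (Set.range ev) := (Set.finite_range ev).bddBelow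
  have hevpos : ∀ i, 0 < ev i := fun i => hXpd.eigenvalues_pos i
  have hleL : ∀ i, ev i ≤ L := fun i => le_ciSup hbdd i
  have hmle : ∀ i, m ≤ ev i := fun i => ciInf_le hbddb i
  obtain ⟨i₀, hi₀⟩ := Finite.exists_min ev
  have hmpos : 0 < m := lt_of_lt_of_le (hevpos i₀) (le_ciInf hi₀)
  have hLpos : 0 < L := lt_of_lt_of_le (hevpos i₀) (hleL i₀)
  have hone : 0 < 1 - γ * (2 * L) := by linarith
  set c := (1 - γ * (2 * L)) / L with hcdef
  have hcL : c * L = 1 - γ * (2 * L) := div_mul_cancel₀ _ (ne_of_gt hLpos)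
  have hcpos : 0 < c := div_pos hone hLpos
  refine ⟨Real.sqrt (L / m), c / 2, Real.sqrt_pos.2 (div_pos hLpos hmpos), by positivity,
    fun x hx => ?_⟩
  set f : ℝ → Fin n → ℝ := fun t => A *ᵥ x t + g t (x t) with hf
  set V : ℝ → ℝ := fun s => x s ⬝ᵥ (X *ᵥ x s) with hV
  have hXsymm : Xᵀ = X := by
    have h := hX; rwa [Matrix.IsHermitian, conjTranspose_eq_transpose_of_trivial] at h
  -- derivative of V
  have hVderiv : ∀ t, HasDerivAt V (-(x t ⬝ᵥ x t) + 2 * (x t ⬝ᵥ (X *ᵥ g t (x t)))) t := by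
    intro t
    have h1 : HasDerivAt V (∑ i, ∑ j, (f t i * X i j * x t j + x t i * X i j * f t j)) t := by
      have hVeq : V = fun s => ∑ i, ∑ j, x s i * X i j * x s j := by
        funext s
        simp only [hV, dotProduct, mulVec, Finset.mul_sum]
        exact Finset.sum_congr rfl fun i _ => Finset.sum_congr rfl fun j _ => by ring
      rw [hVeq]
      exact HasDerivAt.fun_sum fun i _ => HasDerivAt.fun_sum fun j _ =>
        ((hx t i).mul_const (X i j)).mul (hx t j)
    have key : (∑ i, ∑ j, (f t i * X i j * x t j + x t i * X i j * f t j))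
        = -(x t ⬝ᵥ x t) + 2 * (x t ⬝ᵥ (X *ᵥ g t (x t))) := by
      have e1 : (∑ i, ∑ j, (f t i * X i j * x t j + x t i * X i j * f t j))
          = f t ⬝ᵥ (X *ᵥ x t) + x t ⬝ᵥ (X *ᵥ f t) := by
        simp only [dotProduct, mulVec, Finset.mul_sum, ← Finset.sum_add_distrib]
        exact Finset.sum_congr rfl fun i _ => Finset.sum_congr rfl fun j _ => by ring
      have e2 : f t ⬝ᵥ (X *ᵥ x t) = x t ⬝ᵥ (X *ᵥ f t) := by
        rw [dotProduct_comm (f t), my_mulVec_dot, hXsymm]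
      have e3 : x t ⬝ᵥ (X *ᵥ f t)
          = x t ⬝ᵥ (X *ᵥ (A *ᵥ x t)) + x t ⬝ᵥ (X *ᵥ g t (x t)) := by
        rw [hf, mulVec_add, dotProduct_add]
      have e4 : 2 * (x t ⬝ᵥ (X *ᵥ (A *ᵥ x t))) = -(x t ⬝ᵥ x t) := by
        have h5 : x t ⬝ᵥ ((Aᵀ * X + X * A) *ᵥ x t)
            = x t ⬝ᵥ ((-1 : Matrix (Fin n) (Fin n) ℝ) *ᵥ x t) := by rw [hLyap]
        rw [add_mulVec, dotProduct_add, neg_mulVec, one_mulVec, dotProduct_neg] at h5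
        have h6 : x t ⬝ᵥ ((Aᵀ * X) *ᵥ x t) = x t ⬝ᵥ (X *ᵥ (A *ᵥ x t)) := by
          rw [← mulVec_mulVec, dotProduct_comm (x t) (Aᵀ *ᵥ (X *ᵥ x t)), my_mulVec_dot,
            transpose_transpose, my_mulVec_dot, hXsymm]
        rw [h6, ← mulVec_mulVec] at h5
        linarith
      rw [e1, e2, e3]
      linarith
    rw [← key]
    exact h1
  -- the differential inequality
  have hDle : ∀ t, -(x t ⬝ᵥ x t) + 2 * (x t ⬝ᵥ (X *ᵥ g t (x t))) ≤ -c * V t := by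
    intro t
    have hxx : x t ⬝ᵥ x t = euclNorm (x t) ^ 2 := (euclNorm_sq (x t)).symm
    have hb1 : x t ⬝ᵥ (X *ᵥ g t (x t)) ≤ L * (euclNorm (x t) * euclNorm (g t (x t))) :=
      my_upper hX hLpos.le (fun i => (hevpos i).le) hleL _ _
    have hb2 : euclNorm (x t) * euclNorm (g t (x t)) ≤ euclNorm (x t) * (γ * euclNorm (x t)) :=
      mul_le_mul_of_nonneg_left (hg t (x t)) (euclNorm_nonneg _)
    have hb3 : x t ⬝ᵥ (X *ᵥ g t (x t)) ≤ L * γ * euclNorm (x t) ^ 2 := by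
      calc x t ⬝ᵥ (X *ᵥ g t (x t)) ≤ L * (euclNorm (x t) * euclNorm (g t (x t))) := hb1
        _ ≤ L * (euclNorm (x t) * (γ * euclNorm (x t))) :=
            mul_le_mul_of_nonneg_left hb2 hLpos.le
        _ = L * γ * euclNorm (x t) ^ 2 := by ring
    have hVle : V t ≤ L * euclNorm (x t) ^ 2 := by
      have := my_upper hX hLpos.le (fun i => (hevpos i).le) hleL (x t) (x t)
      calc V t ≤ L * (euclNorm (x t) * euclNorm (x t)) := this
        _ = L * euclNorm (x t) ^ 2 := by ring
    have hstep : -c * (L * euclNorm (x t) ^ 2) ≤ -c * V t :=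
      mul_le_mul_of_nonpos_left hVle (neg_nonpos.2 hcpos.le)
    have : -c * (L * euclNorm (x t) ^ 2) = -(1 - γ * (2 * L)) * euclNorm (x t) ^ 2 := by
      rw [← hcL]; ring
    nlinarith [sq_nonneg (euclNorm (x t))]
  -- Gronwall via monotonicity
  set h : ℝ → ℝ := fun s => V s * Real.exp (c * s) with hh
  have hhderiv : ∀ t, HasDerivAt h
      ((-(x t ⬝ᵥ x t) + 2 * (x t ⬝ᵥ (X *ᵥ g t (x t)))) * Real.exp (c * t)
        + V t * (Real.exp (c * t) * c)) t := by
    intro t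
    have he : HasDerivAt (fun s : ℝ => Real.exp (c * s)) (Real.exp (c * t) * c) t := by
      simpa using ((hasDerivAt_id t).const_mul c).exp
    exact (hVderiv t).mul he
  have hanti : AntitoneOn h (Set.Ici (0 : ℝ)) := by
    refine antitoneOn_of_deriv_nonpos (convex_Ici 0)
      (fun s _ => (hhderiv s).continuousAt.continuousWithinAt)
      (fun s _ => (hhderiv s).differentiableAt.differentiableWithinAt) (fun s _ => ?_)
    rw [(hhderiv s).deriv]
    have h1 := hDle s
    have h2 : (-(x s ⬝ᵥ x s) + 2 * (x s ⬝ᵥ (X *ᵥ g s (x s)))) * Real.exp (c * s)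
        ≤ (-c * V s) * Real.exp (c * s) :=
      mul_le_mul_of_nonneg_right h1 (Real.exp_pos _).le
    nlinarith [Real.exp_pos (c * s)]
  -- conclude
  intro t ht
  have hVt : V t * Real.exp (c * t) ≤ V 0 := by
    have := hanti (Set.self_mem_Ici) ht ht
    simpa [hh] using this
  have hVval : V t ≤ V 0 * Real.exp (-(c * t)) := by
    calc V t = V t * Real.exp (c * t) * (Real.exp (c * t))⁻¹ := by
          field_simp
      _ ≤ V 0 * (Real.exp (c * t))⁻¹ :=
          mul_le_mul_of_nonneg_right hVt (by positivity)
      _ = V 0 * Real.exp (-(c * t)) := by rw [Real.exp_neg]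
  have hlow : m * euclNorm (x t) ^ 2 ≤ V t := by
    rw [euclNorm_sq]; exact my_lower hX hmle (x t)
  have hup : V 0 ≤ L * euclNorm (x 0) ^ 2 := by
    have := my_upper hX hLpos.le (fun i => (hevpos i).le) hleL (x 0) (x 0)
    calc V 0 ≤ L * (euclNorm (x 0) * euclNorm (x 0)) := this
      _ = L * euclNorm (x 0) ^ 2 := by ring
  have hfinal : euclNorm (x t) ^ 2
      ≤ (Real.sqrt (L / m) * euclNorm (x 0) * Real.exp (-(c / 2) * t)) ^ 2 := by
    have hexp : (0:ℝ) ≤ Real.exp (-(c * t)) := (Real.exp_pos _).le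
    have h1 : m * euclNorm (x t) ^ 2 ≤ L * euclNorm (x 0) ^ 2 * Real.exp (-(c * t)) := by
      calc m * euclNorm (x t) ^ 2 ≤ V t := hlow
        _ ≤ V 0 * Real.exp (-(c * t)) := hVval
        _ ≤ L * euclNorm (x 0) ^ 2 * Real.exp (-(c * t)) :=
            mul_le_mul_of_nonneg_right hup hexp
    have hexp2 : Real.exp (-(c / 2) * t) ^ 2 = Real.exp (-(c * t)) := by
      rw [sq, ← Real.exp_add]; congr 1; ring
    have hsq : (Real.sqrt (L / m) * euclNorm (x 0) * Real.exp (-(c / 2) * t)) ^ 2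
        = L / m * euclNorm (x 0) ^ 2 * Real.exp (-(c * t)) := by
      rw [mul_pow, mul_pow, Real.sq_sqrt (div_pos hLpos hmpos).le, hexp2]
    rw [hsq]
    rw [div_mul_eq_mul_div, div_mul_eq_mul_div, le_div_iff₀ hmpos]
    nlinarith
  have hrhs : 0 ≤ Real.sqrt (L / m) * euclNorm (x 0) * Real.exp (-(c / 2) * t) := by
    have := euclNorm_nonneg (x 0); positivity
  calc euclNorm (x t) = Real.sqrt (euclNorm (x t) ^ 2) :=
        (Real.sqrt_sq (euclNorm_nonneg _)).symm
    _ ≤ Real.sqrt ((Real.sqrt (L / m) * euclNorm (x 0) * Real.exp (-(c / 2) * t)) ^ 2) :=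
        Real.sqrt_le_sqrt hfinal
    _ = Real.sqrt (L / m) * euclNorm (x 0) * Real.exp (-(c / 2) * t) := Real.sqrt_sq hrhs
end

section
/- Consider the cluster synchronization manifold M = {θ ∈ 𝕋ⁿ : θ_i = θ_j for all i,j in the same partition class P_k}. If the natural frequencies satisfy ω_i = ω_j for all i,j ∈ P_k and the coupling weights satisfy Σ_{q∈P_ℓ}(w_{iq} - w_{jq}) = 0 for all i,j ∈ P_k and all ℓ ≠ k, then M is invariant under the Kuramoto dynamics θ̇_i = ω_i + Σ_j w_{ij} sin(θ_j - θ_i): if θ(0) ∈ M then θ(t) ∈ M for all t ≥ 0. -/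
open Finset

private lemma sin_lip' (a b : ℝ) : |Real.sin a - Real.sin b| ≤ |a - b| := by
  rw [Real.sin_sub_sin, abs_mul, abs_mul]
  calc |(2:ℝ)| * |Real.sin ((a - b)/2)| * |Real.cos ((a + b)/2)|
      ≤ |(2:ℝ)| * |(a - b)/2| * 1 := by
        apply mul_le_mul (mul_le_mul_of_nonneg_left Real.abs_sin_le_abs (abs_nonneg _))
          (Real.abs_cos_le_one _) (abs_nonneg _) (by positivity)
    _ = |a - b| := by rw [mul_one, abs_div, abs_two]; ring

private lemma key_est {n r : ℕ} (c : Fin n → Fin r) (w : Fin n → Fin n → ℝ)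
    (hw : ∀ i j, 0 ≤ w i j)
    (hbal : ∀ i j, c i = c j → ∀ l, l ≠ c i →
      ∑ q ∈ Finset.univ.filter (fun q => c q = l), (w i q - w j q) = 0)
    (x : Fin n → ℝ) (i j : Fin n) (hij : c i = c j) :
    |(∑ q, w i q * Real.sin (x q - x i)) - ∑ q, w j q * Real.sin (x q - x j)|
      ≤ ((2*r+1) * ∑ a, ∑ b, w a b) *
        ∑ p ∈ Finset.univ.filter (fun p : Fin n × Fin n => c p.1 = c p.2),
          |x p.1 - x p.2| := by
  classical
  set M : ℝ := ∑ a, ∑ b, w a b with hM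
  set S : Finset (Fin n × Fin n) := Finset.univ.filter (fun p => c p.1 = c p.2) with hSdef
  set σ : ℝ := ∑ p ∈ S, |x p.1 - x p.2| with hσ
  have hM0 : 0 ≤ M := Finset.sum_nonneg fun a _ => Finset.sum_nonneg fun b _ => hw a b
  have hσ0 : 0 ≤ σ := Finset.sum_nonneg fun p _ => abs_nonneg _
  have hrow : ∀ a, (∑ b, w a b) ≤ M :=
    fun a => Finset.single_le_sum (f := fun a => ∑ b, w a b)
      (fun a _ => Finset.sum_nonneg fun b _ => hw a b) (Finset.mem_univ a)
  have hd : ∀ p q : Fin n, c p = c q → |x p - x q| ≤ σ := by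
    intro p q hpq
    exact Finset.single_le_sum (f := fun p : Fin n × Fin n => |x p.1 - x p.2|)
      (fun _ _ => abs_nonneg _)
      (Finset.mem_filter.mpr ⟨Finset.mem_univ (p, q), hpq⟩)
  -- split the difference
  have hsplit : (∑ q, w i q * Real.sin (x q - x i)) - ∑ q, w j q * Real.sin (x q - x j)
      = (∑ q, w i q * (Real.sin (x q - x i) - Real.sin (x q - x j)))
        + ∑ q, (w i q - w j q) * Real.sin (x q - x j) := by
    rw [← Finset.sum_add_distrib, ← Finset.sum_sub_distrib]
    exact Finset.sum_congr rfl fun q _ => by ring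
  rw [hsplit]
  have hA : |∑ q, w i q * (Real.sin (x q - x i) - Real.sin (x q - x j))| ≤ M * σ := by
    calc |∑ q, w i q * (Real.sin (x q - x i) - Real.sin (x q - x j))|
        ≤ ∑ q, |w i q * (Real.sin (x q - x i) - Real.sin (x q - x j))| :=
          Finset.abs_sum_le_sum_abs _ _
      _ ≤ ∑ q : Fin n, w i q * σ := by
          apply Finset.sum_le_sum
          intro q _
          rw [abs_mul, abs_of_nonneg (hw i q)]
          apply mul_le_mul_of_nonneg_left _ (hw i q)
          calc |Real.sin (x q - x i) - Real.sin (x q - x j)|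
              ≤ |(x q - x i) - (x q - x j)| := sin_lip' _ _
            _ = |x j - x i| := by ring_nf
            _ ≤ σ := hd j i hij.symm
      _ = (∑ q, w i q) * σ := by rw [Finset.sum_mul]
      _ ≤ M * σ := mul_le_mul_of_nonneg_right (hrow i) hσ0
  have hBl : ∀ l : Fin r,
      |∑ q ∈ Finset.univ.filter (fun q => c q = l), (w i q - w j q) * Real.sin (x q - x j)|
        ≤ 2 * M * σ := by
    intro l
    set T : Finset (Fin n) := Finset.univ.filter (fun q => c q = l) with hT
    have hTsum : ∀ (g : Fin n → ℝ), (∀ q ∈ T, |g q| ≤ σ) →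
        |∑ q ∈ T, (w i q - w j q) * g q| ≤ 2 * M * σ := by
      intro g hg
      calc |∑ q ∈ T, (w i q - w j q) * g q|
          ≤ ∑ q ∈ T, |(w i q - w j q) * g q| := Finset.abs_sum_le_sum_abs _ _
        _ ≤ ∑ q ∈ T, (w i q + w j q) * σ := by
            apply Finset.sum_le_sum
            intro q hq
            rw [abs_mul]
            apply mul_le_mul ((abs_sub _ _).trans ?_) (hg q hq) (abs_nonneg _)
              (add_nonneg (hw i q) (hw j q))
            rw [abs_of_nonneg (hw i q), abs_of_nonneg (hw j q)]
        _ ≤ ∑ q : Fin n, (w i q + w j q) * σ := by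
            apply Finset.sum_le_sum_of_subset_of_nonneg (Finset.subset_univ T)
            intro q _ _; exact mul_nonneg (add_nonneg (hw i q) (hw j q)) hσ0
        _ = ((∑ q, w i q) + ∑ q, w j q) * σ := by
            rw [← Finset.sum_mul, Finset.sum_add_distrib]
        _ ≤ (M + M) * σ := by
            apply mul_le_mul_of_nonneg_right (add_le_add (hrow i) (hrow j)) hσ0
        _ = 2 * M * σ := by ring
    by_cases hl : l = c i
    · apply hTsum
      intro q hq
      have hcq : c q = l := (Finset.mem_filter.mp hq).2
      calc |Real.sin (x q - x j)| ≤ |x q - x j| := Real.abs_sin_le_abs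
        _ ≤ σ := hd q j (by rw [hcq, hl, hij])
    · have hb := hbal i j hij l hl
      rw [← hT] at hb
      rcases T.eq_empty_or_nonempty with he | ⟨q₀, hq₀⟩
      · rw [he]
        simp only [Finset.sum_empty, abs_zero]
        have : (0:ℝ) ≤ 2 * M * σ := by
          apply mul_nonneg (by linarith) hσ0
        linarith
      · have hq₀c : c q₀ = l := (Finset.mem_filter.mp hq₀).2
        have heq : ∑ q ∈ T, (w i q - w j q) * Real.sin (x q - x j)
            = ∑ q ∈ T, (w i q - w j q) *
                (Real.sin (x q - x j) - Real.sin (x q₀ - x j)) := by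
          symm
          simp only [mul_sub]
          rw [Finset.sum_sub_distrib, ← Finset.sum_mul, hb, zero_mul, sub_zero]
        rw [heq]
        apply hTsum
        intro q hq
        have hcq : c q = l := (Finset.mem_filter.mp hq).2
        calc |Real.sin (x q - x j) - Real.sin (x q₀ - x j)|
            ≤ |(x q - x j) - (x q₀ - x j)| := sin_lip' _ _
          _ = |x q - x q₀| := by ring_nf
          _ ≤ σ := hd q q₀ (by rw [hcq, hq₀c])
  have hfib : ∑ q, (w i q - w j q) * Real.sin (x q - x j)
      = ∑ l : Fin r, ∑ q ∈ Finset.univ.filter (fun q => c q = l),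
          (w i q - w j q) * Real.sin (x q - x j) :=
    (Finset.sum_fiberwise_of_maps_to (fun q _ => Finset.mem_univ (c q)) _).symm
  calc |(∑ q, w i q * (Real.sin (x q - x i) - Real.sin (x q - x j)))
        + ∑ q, (w i q - w j q) * Real.sin (x q - x j)|
      ≤ |∑ q, w i q * (Real.sin (x q - x i) - Real.sin (x q - x j))|
        + |∑ q, (w i q - w j q) * Real.sin (x q - x j)| := abs_add_le _ _
    _ ≤ M * σ + ∑ l : Fin r, 2 * M * σ := by
        apply add_le_add hA
        rw [hfib]
        exact (Finset.abs_sum_le_sum_abs _ _).trans (Finset.sum_le_sum fun l _ => hBl l)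
    _ = ((2*r+1) * M) * σ := by
        simp only [Finset.sum_const, Finset.card_univ, Fintype.card_fin, nsmul_eq_mul]
        ring

/-- Invariance of the cluster synchronization manifold for the Kuramoto network:
if natural frequencies are equal within clusters and the inter-cluster weights are
balanced, then a solution starting with equal phases within each cluster keeps
equal phases within each cluster for all `t ≥ 0`.  The cluster partition is encoded
by the assignment map `c : Fin n → Fin r`. -/
theorem stmt2 {n r : ℕ} (c : Fin n → Fin r) (ω : Fin n → ℝ)
    (w : Fin n → Fin n → ℝ) (hw : ∀ i j, 0 ≤ w i j)
    (hω : ∀ i j, c i = c j → ω i = ω j)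
    (hbal : ∀ i j, c i = c j → ∀ l, l ≠ c i →
      ∑ q ∈ Finset.univ.filter (fun q => c q = l), (w i q - w j q) = 0)
    (θ : ℝ → Fin n → ℝ)
    (hθ : ∀ t i, HasDerivAt (fun s => θ s i)
      (ω i + ∑ j, w i j * Real.sin (θ t j - θ t i)) t)
    (h0 : ∀ i j, c i = c j → θ 0 i = θ 0 j) :
    ∀ t, 0 ≤ t → ∀ i j, c i = c j → θ t i = θ t j := by
  classical
  set S : Finset (Fin n × Fin n) := Finset.univ.filter (fun p => c p.1 = c p.2) with hSdef
  set M : ℝ := ∑ a, ∑ b, w a b with hM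
  have hM0 : 0 ≤ M := Finset.sum_nonneg fun a _ => Finset.sum_nonneg fun b _ => hw a b
  set K : ℝ := (2*r+1) * M with hK
  have hK0 : 0 ≤ K := by positivity
  set L : ℝ := 2 * K * S.card with hL
  have hL0 : 0 ≤ L := by positivity
  set f : ℝ → ℝ := fun t => ∑ p ∈ S, (θ t p.1 - θ t p.2)^2 with hf
  set f' : ℝ → ℝ := fun t => ∑ p ∈ S, (2 * (θ t p.1 - θ t p.2) *
      ((∑ q, w p.1 q * Real.sin (θ t q - θ t p.1))
        - ∑ q, w p.2 q * Real.sin (θ t q - θ t p.2))) with hf'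
  have hf0 : ∀ t, 0 ≤ f t := fun t => Finset.sum_nonneg fun p _ => sq_nonneg _
  have hder : ∀ t, HasDerivAt f (f' t) t := by
    intro t
    apply HasDerivAt.fun_sum
    intro p hp
    have hcp : c p.1 = c p.2 := (Finset.mem_filter.mp hp).2
    have h2 := ((hθ t p.1).fun_sub (hθ t p.2)).fun_pow 2
    refine h2.congr_deriv ?_
    rw [hω p.1 p.2 hcp]
    push_cast
    ring
  have hbound : ∀ t, |f' t| ≤ L * f t := by
    intro t
    set σ : ℝ := ∑ p ∈ S, |θ t p.1 - θ t p.2| with hσ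
    have hσ0 : 0 ≤ σ := Finset.sum_nonneg fun p _ => abs_nonneg _
    have h1 : |f' t| ≤ ∑ p ∈ S, 2 * |θ t p.1 - θ t p.2| * (K * σ) := by
      refine (Finset.abs_sum_le_sum_abs _ _).trans (Finset.sum_le_sum fun p hp => ?_)
      have hcp : c p.1 = c p.2 := (Finset.mem_filter.mp hp).2
      have hk := key_est c w hw hbal (θ t) p.1 p.2 hcp
      have hk' : |(∑ q, w p.1 q * Real.sin (θ t q - θ t p.1))
          - ∑ q, w p.2 q * Real.sin (θ t q - θ t p.2)| ≤ K * σ := by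
        rw [hK, hσ, hSdef, hM]; exact hk
      rw [abs_mul, abs_mul, abs_two]
      have h3 := mul_le_mul_of_nonneg_left hk' (abs_nonneg (θ t p.1 - θ t p.2))
      nlinarith [abs_nonneg (θ t p.1 - θ t p.2)]
    have h2 : ∑ p ∈ S, 2 * |θ t p.1 - θ t p.2| * (K * σ) = 2 * K * σ^2 := by
      rw [← Finset.sum_mul, ← Finset.mul_sum, ← hσ]
      ring
    have h4 : σ^2 ≤ (S.card : ℝ) * f t := by
      have h5 := sq_sum_le_card_mul_sum_sq (s := S)
        (f := fun p => |θ t p.1 - θ t p.2|)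
      simpa [sq_abs, ← hσ, hf] using h5
    calc |f' t| ≤ 2 * K * σ^2 := h1.trans (le_of_eq h2)
      _ ≤ 2 * K * ((S.card : ℝ) * f t) := by
          apply mul_le_mul_of_nonneg_left h4 (by positivity)
      _ = L * f t := by rw [hL]; ring
  intro T hT i j hij
  have hcont : ContinuousOn f (Set.Icc 0 T) := fun t _ =>
    (hder t).continuousAt.continuousWithinAt
  have hderW : ∀ t ∈ Set.Ico 0 T, HasDerivWithinAt f (f' t) (Set.Ici t) t :=
    fun t _ => (hder t).hasDerivWithinAt
  have ha : ‖f 0‖ ≤ 0 := by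
    have : f 0 = 0 := Finset.sum_eq_zero fun p hp => by
      rw [h0 p.1 p.2 (Finset.mem_filter.mp hp).2]; ring
    simp [this]
  have hgron := norm_le_gronwallBound_of_norm_deriv_right_le hcont hderW ha
    (K := L) (ε := 0)
    (fun t _ => by
      rw [Real.norm_eq_abs, Real.norm_eq_abs, abs_of_nonneg (hf0 t), add_zero]
      exact hbound t)
    T (Set.right_mem_Icc.mpr hT)
  rw [gronwallBound_ε0, zero_mul] at hgron
  have hfT : f T = 0 := le_antisymm (by simpa [Real.norm_eq_abs, abs_of_nonneg (hf0 T)] using hgron) (hf0 T)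
  have hterm := (Finset.sum_eq_zero_iff_of_nonneg fun p _ => sq_nonneg
      (θ T p.1 - θ T p.2)).mp hfT ⟨i, j⟩ (Finset.mem_filter.mpr ⟨Finset.mem_univ _, hij⟩)
  have : θ T i - θ T j = 0 := by
    have := pow_eq_zero_iff (n := 2) (by norm_num) |>.mp hterm
    exact this
  linarith
end

section
/- Let S = [s_{kℓ}] ∈ ℝ^{r×r} be an M-matrix (off-diagonal entries nonpositive, all leading principal minors positive). Then there exist positive constants d_1,…,d_r such that DS + SᵀD is positive definite, where D = diag(d_1,…,d_r). -/
open Matrix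

/-- All leading principal minors of `S` are positive. -/
def leadingMinorsPos {r : ℕ} (S : Matrix (Fin r) (Fin r) ℝ) : Prop :=
  ∀ (p : ℕ) (h : p ≤ r), 0 < (S.submatrix (Fin.castLE h) (Fin.castLE h)).det

lemma submatrix_castLE_rfl {n : ℕ} (S : Matrix (Fin n) (Fin n) ℝ) :
    S.submatrix (Fin.castLE le_rfl) (Fin.castLE le_rfl) = S := by
  ext i j; rfl

/-- M-matrices solve nonnegative systems nonnegatively (i.e. the inverse is entrywise
nonnegative). -/
lemma solve_nonneg (n : ℕ) (S : Matrix (Fin n) (Fin n) ℝ)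
    (hoff : ∀ k l, k ≠ l → S k l ≤ 0) (hm : leadingMinorsPos S)
    (f : Fin n → ℝ) (hf : ∀ i, 0 ≤ f i) :
    ∃ x : Fin n → ℝ, (∀ i, 0 ≤ x i) ∧ S.mulVec x = f := by
  induction n with
  | zero =>
    exact ⟨0, fun i => i.elim0, by funext i; exact i.elim0⟩
  | succ n ih =>
    classical
    set A : Matrix (Fin n) (Fin n) ℝ := S.submatrix Fin.castSucc Fin.castSucc with hAdef
    have hAentry : ∀ k l, A k l = S k.castSucc l.castSucc := fun k l => rfl
    have hoffA : ∀ k l, k ≠ l → A k l ≤ 0 := by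
      intro k l hkl
      exact hoff _ _ (by simpa [Fin.castSucc_inj] using hkl)
    have hmA : leadingMinorsPos A := by
      intro p h
      have hcomp : (A.submatrix (Fin.castLE h) (Fin.castLE h))
          = S.submatrix (Fin.castLE (h.trans (Nat.le_succ n)))
              (Fin.castLE (h.trans (Nat.le_succ n))) := by
        ext i j; rfl
      rw [hcomp]; exact hm p _
    have hdetA : 0 < A.det := by
      have := hmA n le_rfl; rwa [submatrix_castLE_rfl] at this
    have hdetS : 0 < S.det := by
      have := hm (n + 1) le_rfl; rwa [submatrix_castLE_rfl] at this
    set b : Fin n → ℝ := fun i => S i.castSucc (Fin.last n) with hbdef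
    set c : Fin n → ℝ := fun j => S (Fin.last n) j.castSucc with hcdef
    set dd : ℝ := S (Fin.last n) (Fin.last n) with hdddef
    have hb : ∀ i, b i ≤ 0 := fun i => hoff _ _ (Fin.castSucc_lt_last i).ne
    have hc : ∀ j, c j ≤ 0 := fun j => hoff _ _ (Fin.castSucc_lt_last j).ne'
    obtain ⟨z, hz0, hAz⟩ := ih A hoffA hmA (fun i => -b i)
      (fun i => neg_nonneg.2 (hb i))
    obtain ⟨y, hy0, hAy⟩ := ih A hoffA hmA (fun i => f i.castSucc) (fun i => hf _)
    haveI : Invertible A := A.invertibleOfIsUnitDet (isUnit_iff_ne_zero.2 hdetA.ne')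
    have hAz' : A.mulVec z = -b := by
      funext i; simpa using congrFun hAz i
    have hAinv_b : A⁻¹.mulVec b = -z := by
      have h1 : A.mulVec (-z) = b := by
        rw [Matrix.mulVec_neg, hAz', neg_neg]
      calc A⁻¹.mulVec b = A⁻¹.mulVec (A.mulVec (-z)) := by rw [h1]
        _ = (A⁻¹ * A).mulVec (-z) := by rw [Matrix.mulVec_mulVec]
        _ = -z := by
            rw [Matrix.nonsing_inv_mul A (isUnit_iff_ne_zero.2 hdetA.ne'), Matrix.one_mulVec]
    -- determinant factorization via Schur complement
    have hdet_eq : S.det = A.det * (dd + c ⬝ᵥ z) := by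
      set e : Fin n ⊕ Fin 1 ≃ Fin (n + 1) := finSumFinEquiv with hedef
      have h1 : S.det = (S.submatrix e e).det := (Matrix.det_submatrix_equiv_self e S).symm
      set M : Matrix (Fin n ⊕ Fin 1) (Fin n ⊕ Fin 1) ℝ := S.submatrix e e with hMdef
      have hM11 : M.toBlocks₁₁ = A := by ext i j; rfl
      have hM12 : M.toBlocks₁₂ = Matrix.of (fun i (_ : Fin 1) => b i) := by
        ext i j
        have : j = 0 := Subsingleton.elim _ _
        subst this; rfl
      have hM21 : M.toBlocks₂₁ = Matrix.of (fun (_ : Fin 1) j => c j) := by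
        ext i j
        have : i = 0 := Subsingleton.elim _ _
        subst this; rfl
      have hM22 : M.toBlocks₂₂ = Matrix.of (fun (_ : Fin 1) (_ : Fin 1) => dd) := by
        ext i j
        have hi : i = 0 := Subsingleton.elim _ _
        have hj : j = 0 := Subsingleton.elim _ _
        subst hi; subst hj; rfl
      have hblocks : M = Matrix.fromBlocks (M.toBlocks₁₁) (M.toBlocks₁₂) (M.toBlocks₂₁)
          (M.toBlocks₂₂) := (Matrix.fromBlocks_toBlocks M).symm
      rw [h1, hblocks, hM11, hM12, hM21, hM22, Matrix.det_fromBlocks₁₁]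
      congr 1
      rw [Matrix.det_fin_one]
      have hinv : (⅟A : Matrix (Fin n) (Fin n) ℝ) = A⁻¹ := invOf_eq_nonsing_inv A
      have hC : (Matrix.of (fun (_ : Fin 1) j => c j) * ⅟A *
          Matrix.of (fun i (_ : Fin 1) => b i)) 0 0 = c ⬝ᵥ (A⁻¹.mulVec b) := by
        rw [hinv]
        simp only [Matrix.mul_apply, Matrix.of_apply, dotProduct, Matrix.mulVec,
          Finset.sum_mul, Finset.mul_sum]
        rw [Finset.sum_comm]
        exact Finset.sum_congr rfl fun j _ => Finset.sum_congr rfl fun k _ => by ring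
      simp only [Matrix.sub_apply, Matrix.of_apply, hC, hAinv_b, dotProduct_neg]
      ring
    have hs : 0 < dd + c ⬝ᵥ z := by
      nlinarith [hdetS, hdetA, hdet_eq]
    have hcy : c ⬝ᵥ y ≤ 0 := by
      apply Finset.sum_nonpos
      intro j _
      exact mul_nonpos_of_nonpos_of_nonneg (hc j) (hy0 j)
    set ξ : ℝ := (f (Fin.last n) - c ⬝ᵥ y) / (dd + c ⬝ᵥ z) with hxidef
    have hξ : 0 ≤ ξ := div_nonneg (by linarith [hf (Fin.last n)]) hs.le
    refine ⟨Fin.snoc (fun i => y i + ξ * z i) ξ, ?_, ?_⟩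
    · intro i
      refine Fin.lastCases ?_ ?_ i
      · simpa using hξ
      · intro k
        simp only [Fin.snoc_castSucc]
        have := hy0 k; have := hz0 k
        nlinarith
    · funext i
      have hxval : ∀ j : Fin n, (Fin.snoc (fun i => y i + ξ * z i) ξ : Fin (n+1) → ℝ) j.castSucc
          = y j + ξ * z j := fun j => Fin.snoc_castSucc _ _ _
      have hxlast : (Fin.snoc (fun i => y i + ξ * z i) ξ : Fin (n+1) → ℝ) (Fin.last n) = ξ :=
        Fin.snoc_last _ _
      have hsum : ∀ i : Fin (n + 1), S.mulVec (Fin.snoc (fun i => y i + ξ * z i) ξ) i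
          = (∑ j : Fin n, S i j.castSucc * (y j + ξ * z j)) + S i (Fin.last n) * ξ := by
        intro i
        simp only [Matrix.mulVec, dotProduct]
        rw [Fin.sum_univ_castSucc]
        congr 1
        · exact Finset.sum_congr rfl fun j _ => by rw [hxval j]
        · rw [hxlast]
      have hexp : ∀ (i : Fin (n + 1)),
          ∑ j : Fin n, S i j.castSucc * (y j + ξ * z j)
            = (∑ j : Fin n, S i j.castSucc * y j) + ξ * ∑ j : Fin n, S i j.castSucc * z j := by
        intro i
        rw [Finset.mul_sum, ← Finset.sum_add_distrib]
        exact Finset.sum_congr rfl fun j _ => by ring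
      refine Fin.lastCases ?_ ?_ i
      · rw [hsum, hexp]
        have h1 : ∑ j : Fin n, S (Fin.last n) j.castSucc * y j = c ⬝ᵥ y := rfl
        have h2 : ∑ j : Fin n, S (Fin.last n) j.castSucc * z j = c ⬝ᵥ z := rfl
        rw [h1, h2]
        have : ξ * (dd + c ⬝ᵥ z) = f (Fin.last n) - c ⬝ᵥ y := by
          rw [hxidef, div_mul_cancel₀ _ hs.ne']
        rw [← hdddef]
        linarith [this]
      · intro k
        rw [hsum, hexp]
        have h1 : ∑ j : Fin n, S k.castSucc j.castSucc * y j = A.mulVec y k := rfl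
        have h2 : ∑ j : Fin n, S k.castSucc j.castSucc * z j = A.mulVec z k := rfl
        rw [h1, h2, hAy, hAz']
        simp only [Pi.neg_apply]
        have hbk : S k.castSucc (Fin.last n) = b k := rfl
        rw [hbk]
        ring

/-- For an M-matrix there is an entrywise positive vector with positive image. -/
lemma exists_pos_vec (n : ℕ) (S : Matrix (Fin n) (Fin n) ℝ)
    (hoff : ∀ k l, k ≠ l → S k l ≤ 0) (hm : leadingMinorsPos S) :
    ∃ x : Fin n → ℝ, (∀ i, 0 < x i) ∧ S.mulVec x = (fun _ => 1) := by
  obtain ⟨x, hx0, hSx⟩ := solve_nonneg n S hoff hm (fun _ => 1) (fun _ => zero_le_one)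
  refine ⟨x, ?_, hSx⟩
  intro i
  have h1 : ∑ j, S i j * x j = 1 := by
    have := congrFun hSx i
    simpa [Matrix.mulVec, dotProduct] using this
  have hrest : ∑ j ∈ Finset.univ.erase i, S i j * x j ≤ 0 := by
    apply Finset.sum_nonpos
    intro j hj
    exact mul_nonpos_of_nonpos_of_nonneg
      (hoff i j (Finset.ne_of_mem_erase hj).symm) (hx0 j)
  have hsplit := Finset.add_sum_erase Finset.univ (fun j => S i j * x j) (Finset.mem_univ i)
  have hii : 1 ≤ S i i * x i := by
    linarith
  rcases (hx0 i).lt_or_eq with h | h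
  · exact h
  · exfalso; rw [← h] at hii; simp at hii; linarith

/-- If `S` is a nonsingular M-matrix (nonpositive off-diagonal entries, positive leading
principal minors), then there are positive `d_1, …, d_r` such that `DS + SᵀD` is positive
definite, where `D = diag(d)`. -/
theorem stmt9 {r : ℕ} (S : Matrix (Fin r) (Fin r) ℝ)
    (hoff : ∀ k l, k ≠ l → S k l ≤ 0)
    (hminors : leadingMinorsPos S) :
    ∃ d : Fin r → ℝ, (∀ k, 0 < d k) ∧
      (Matrix.diagonal d * S + Sᵀ * Matrix.diagonal d).PosDef := by
  classical
  obtain ⟨x, hx, hSx⟩ := exists_pos_vec r S hoff hminors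
  have hoffT : ∀ k l, k ≠ l → Sᵀ k l ≤ 0 := fun k l h => hoff l k h.symm
  have hmT : leadingMinorsPos Sᵀ := by
    intro p h
    have : (Sᵀ.submatrix (Fin.castLE h) (Fin.castLE h))
        = (S.submatrix (Fin.castLE h) (Fin.castLE h))ᵀ := by ext i j; rfl
    rw [this, Matrix.det_transpose]
    exact hminors p h
  obtain ⟨y, hy, hSy⟩ := exists_pos_vec r Sᵀ hoffT hmT
  set d : Fin r → ℝ := fun k => y k / x k with hddef
  have hd : ∀ k, 0 < d k := fun k => div_pos (hy k) (hx k)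
  have hdx : ∀ k, d k * x k = y k := fun k => div_mul_cancel₀ _ (hx k).ne'
  refine ⟨d, hd, Matrix.posDef_iff_dotProduct_mulVec.mpr ⟨?_, ?_⟩⟩
  · -- Hermitian
    show (Matrix.diagonal d * S + Sᵀ * Matrix.diagonal d)ᴴ = _
    have : (Matrix.diagonal d * S + Sᵀ * Matrix.diagonal d)ᴴ
        = (Matrix.diagonal d * S + Sᵀ * Matrix.diagonal d)ᵀ := rfl
    rw [this, Matrix.transpose_add, Matrix.transpose_mul, Matrix.transpose_mul,
      Matrix.diagonal_transpose, Matrix.transpose_transpose]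
    exact add_comm _ _
  · intro v hv
    set B : Matrix (Fin r) (Fin r) ℝ := Matrix.diagonal d * S + Sᵀ * Matrix.diagonal d with hBdef
    have hBentry : ∀ i j, B i j = d i * S i j + S j i * d j := by
      intro i j
      simp [hBdef, Matrix.add_apply, Matrix.diagonal_mul, Matrix.mul_diagonal,
        Matrix.transpose_apply]
    have hBsymm : ∀ i j, B j i = B i j := by
      intro i j; rw [hBentry, hBentry]; ring
    have hBoff : ∀ i j, i ≠ j → B i j ≤ 0 := by
      intro i j hij
      rw [hBentry]
      have h1 := hoff i j hij
      have h2 := hoff j i hij.symm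
      nlinarith [hd i, hd j]
    have hBx : ∀ i, 0 < B.mulVec x i := by
      intro i
      have : B.mulVec x i = ∑ j, (d i * S i j + S j i * d j) * x j := by
        simp only [Matrix.mulVec, dotProduct]
        exact Finset.sum_congr rfl fun j _ => by rw [hBentry]
      rw [this]
      have hsplit : ∑ j, (d i * S i j + S j i * d j) * x j
          = d i * (∑ j, S i j * x j) + ∑ j, S j i * y j := by
        rw [Finset.mul_sum, ← Finset.sum_add_distrib]
        refine Finset.sum_congr rfl fun j _ => ?_
        rw [← hdx j]; ring
      rw [hsplit]
      have h1 : ∑ j, S i j * x j = 1 := by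
        have := congrFun hSx i
        simpa [Matrix.mulVec, dotProduct] using this
      have h2 : ∑ j, S j i * y j = 1 := by
        have := congrFun hSy i
        simpa [Matrix.mulVec, dotProduct, Matrix.transpose_apply] using this
      rw [h1, h2]
      have := hd i
      nlinarith
    -- the quadratic form
    have hvv : (star v) = v := by simp
    rw [hvv]
    set w : Fin r → ℝ := fun i => v i / x i with hwdef
    have hvw : ∀ i, v i = x i * w i := by
      intro i; rw [hwdef, mul_comm, div_mul_cancel₀ _ (hx i).ne']
    have per : ∀ i j, B i j * (x i * x j) * ((w i ^ 2 + w j ^ 2) / 2) ≤ v i * (B i j * v j) := by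
      intro i j
      rcases eq_or_ne i j with rfl | hne
      · rw [hvw i]; nlinarith [sq_nonneg (w i)]
      · have hcc : B i j * (x i * x j) ≤ 0 :=
          mul_nonpos_of_nonpos_of_nonneg (hBoff i j hne) (mul_nonneg (hx i).le (hx j).le)
        have hkey := mul_nonneg (neg_nonneg.2 hcc) (sq_nonneg (w i - w j))
        rw [hvw i, hvw j]
        nlinarith
    have hform : v ⬝ᵥ B.mulVec v = ∑ i, ∑ j, v i * (B i j * v j) := by
      simp only [Matrix.mulVec, dotProduct, Finset.mul_sum]
    have hlower : ∑ i, ∑ j, B i j * (x i * x j) * ((w i ^ 2 + w j ^ 2) / 2)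
        = ∑ i, x i * w i ^ 2 * (B.mulVec x i) := by
      have step1 : ∀ i j, B i j * (x i * x j) * ((w i ^ 2 + w j ^ 2) / 2)
          = B i j * (x i * x j) * w i ^ 2 / 2 + B i j * (x i * x j) * w j ^ 2 / 2 := by
        intro i j; ring
      have e1 : ∑ i, ∑ j, B i j * (x i * x j) * ((w i ^ 2 + w j ^ 2) / 2)
          = (∑ i, ∑ j, B i j * (x i * x j) * w i ^ 2 / 2)
            + ∑ i, ∑ j, B i j * (x i * x j) * w j ^ 2 / 2 := by
        rw [← Finset.sum_add_distrib]
        refine Finset.sum_congr rfl fun i _ => ?_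
        rw [← Finset.sum_add_distrib]
        exact Finset.sum_congr rfl fun j _ => step1 i j
      have e2 : ∑ i, ∑ j, B i j * (x i * x j) * w j ^ 2 / 2
          = ∑ i, ∑ j, B i j * (x i * x j) * w i ^ 2 / 2 := by
        rw [Finset.sum_comm]
        refine Finset.sum_congr rfl fun i _ => Finset.sum_congr rfl fun j _ => ?_
        rw [hBsymm i j]; ring
      rw [e1, e2]
      rw [← Finset.sum_add_distrib]
      refine Finset.sum_congr rfl fun i _ => ?_
      rw [← Finset.sum_add_distrib]
      have : B.mulVec x i = ∑ j, B i j * x j := rfl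
      rw [this, Finset.mul_sum]
      refine Finset.sum_congr rfl fun j _ => by ring
    have hge : ∑ i, x i * w i ^ 2 * (B.mulVec x i) ≤ v ⬝ᵥ B.mulVec v := by
      rw [hform, ← hlower]
      exact Finset.sum_le_sum fun i _ => Finset.sum_le_sum fun j _ => per i j
    have hpos : 0 < ∑ i, x i * w i ^ 2 * (B.mulVec x i) := by
      have hne : ∃ i, v i ≠ 0 := by
        by_contra h
        push_neg at h
        exact hv (funext h)
      obtain ⟨i0, hi0⟩ := hne
      apply Finset.sum_pos'
      · intro i _
        have := hBx i
        have := hx i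
        positivity
      · refine ⟨i0, Finset.mem_univ i0, ?_⟩
        have hwi : w i0 ≠ 0 := by
          rw [hwdef]
          exact div_ne_zero hi0 (hx i0).ne'
        have h2 : 0 < w i0 ^ 2 := by
          rcases lt_or_gt_of_ne hwi with h' | h' <;> nlinarith
        exact mul_pos (mul_pos (hx i0) h2) (hBx i0)
    linarith
end
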